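/- Let m and n be integers with n ≥ 2 and m − n ≥ 4 such that m and n have the same parity (so m + n is even). Then for every q with 1 ≤ q ≤ n and every i with 1 ≤ i ≤ m−1, the graph distance in M_{m,n} satisfies: d(v_{1,1}, v_{i,q}) = i + q − 2 if 1 ≤ i ≤ (m+n−2q+2)/2, and d(v_{1,1}, v_{i,q}) = m + n − q − i if (m+n−2q+4)/2 ≤ i ≤ m−1. -/
import Mathlib


/-- The relation generating the edges of the generalized Möbius ladder `M_{m,n}`:
horizontal edges `{(i,j),(i+1,j)}`, vertical edges `{(i,j),(i,j+1)}`, and the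
twisted edges `{(m-1,j),(1,n+1-j)}`. -/
def gmlRel (m n : ℕ) (u v : ℕ × ℕ) : Prop :=
  (u.2 = v.2 ∧ v.1 = u.1 + 1) ∨
  (u.1 = v.1 ∧ v.2 = u.2 + 1) ∨
  (u.1 = m - 1 ∧ v.1 = 1 ∧ u.2 + v.2 = n + 1)

/-- The vertex set `{(i,j) : 1 ≤ i ≤ m-1, 1 ≤ j ≤ n}` of `M_{m,n}`. -/
abbrev GMLVert (m n : ℕ) : Type :=
  {p : ℕ × ℕ // 1 ≤ p.1 ∧ p.1 ≤ m - 1 ∧ 1 ≤ p.2 ∧ p.2 ≤ n}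

/-- The generalized Möbius ladder `M_{m,n}` as a simple graph. -/
def GML (m n : ℕ) : SimpleGraph (GMLVert m n) :=
  SimpleGraph.fromRel (fun u v => gmlRel m n u.val v.val)

/-- `W` is a resolving set of `M_{m,n}`: distinct vertices have distinct
tuples of distances to the elements of `W`. -/
def IsResolving (m n : ℕ) (W : Set (GMLVert m n)) : Prop :=
  ∀ u v : GMLVert m n,
    (∀ w ∈ W, (GML m n).dist u w = (GML m n).dist v w) → u = v

/-- The metric dimension of `M_{m,n}`: the minimum cardinality of a resolving set. -/
noncomputable def metricDim (m n : ℕ) : ℕ :=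
  sInf {k : ℕ | ∃ W : Finset (GMLVert m n), W.card = k ∧ IsResolving m n ↑W}

namespace Stmt13Aux

/-- Potential function: distance lower bound from `(1,1)`. -/
def pot (m n : ℕ) (v : GMLVert m n) : ℤ :=
  min ((v.val.1 : ℤ) + v.val.2 - 2) ((m : ℤ) + n - v.val.1 - v.val.2)

lemma adj_of_rel {m n : ℕ} {u v : GMLVert m n} (hne : u.val ≠ v.val)
    (h : gmlRel m n u.val v.val) : (GML m n).Adj u v := by
  rw [GML, SimpleGraph.fromRel_adj]
  exact ⟨fun e => hne (congrArg Subtype.val e), Or.inl h⟩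

lemma pot_adj {m n : ℕ} (hn : 2 ≤ n) (hm : n + 4 ≤ m) {u v : GMLVert m n}
    (h : (GML m n).Adj u v) : (pot m n u - pot m n v).natAbs ≤ 1 := by
  obtain ⟨⟨a, b⟩, ha1, ha2, ha3, ha4⟩ := u
  obtain ⟨⟨c, d⟩, hc1, hc2, hc3, hc4⟩ := v
  rw [GML, SimpleGraph.fromRel_adj] at h
  obtain ⟨-, h | h⟩ := h <;> simp only [gmlRel, pot] at * <;> omega

lemma pot_walk {m n : ℕ} (hn : 2 ≤ n) (hm : n + 4 ≤ m) {u v : GMLVert m n}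
    (p : (GML m n).Walk u v) : pot m n v ≤ pot m n u + p.length := by
  induction p with
  | nil => simp
  | cons h p ih =>
      have := pot_adj hn hm h
      rw [SimpleGraph.Walk.length_cons]
      push_cast
      omega

/-- Horizontal walk from `(a,b)` to `(c,b)`. -/
lemma gridh {m n : ℕ} (a b c : ℕ) (hac : a ≤ c)
    (pa : 1 ≤ a ∧ a ≤ m - 1 ∧ 1 ≤ b ∧ b ≤ n)
    (pc : 1 ≤ c ∧ c ≤ m - 1 ∧ 1 ≤ b ∧ b ≤ n) :
    ∃ p : (GML m n).Walk ⟨(a, b), pa⟩ ⟨(c, b), pc⟩, p.length = c - a := by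
  induction c with
  | zero => exact absurd hac (by omega)
  | succ c ih =>
      rcases Nat.lt_or_ge c a with h | h
      · obtain rfl : a = c + 1 := by omega
        exact ⟨SimpleGraph.Walk.nil, by simp⟩
      · obtain ⟨p, hp⟩ := ih h (by omega)
        have hadj : (GML m n).Adj ⟨(c, b), by omega⟩ ⟨(c + 1, b), pc⟩ := by
          apply adj_of_rel
          · simp only [ne_eq, Prod.mk.injEq]; omega
          · exact Or.inl ⟨rfl, rfl⟩
        exact ⟨p.concat hadj, by rw [SimpleGraph.Walk.length_concat, hp]; omega⟩

/-- Vertical walk from `(a,b)` to `(a,d)`. -/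
lemma gridv {m n : ℕ} (a b d : ℕ) (hbd : b ≤ d)
    (pa : 1 ≤ a ∧ a ≤ m - 1 ∧ 1 ≤ b ∧ b ≤ n)
    (pd : 1 ≤ a ∧ a ≤ m - 1 ∧ 1 ≤ d ∧ d ≤ n) :
    ∃ p : (GML m n).Walk ⟨(a, b), pa⟩ ⟨(a, d), pd⟩, p.length = d - b := by
  induction d with
  | zero => exact absurd hbd (by omega)
  | succ d ih =>
      rcases Nat.lt_or_ge d b with h | h
      · obtain rfl : b = d + 1 := by omega
        exact ⟨SimpleGraph.Walk.nil, by simp⟩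
      · obtain ⟨p, hp⟩ := ih h (by omega)
        have hadj : (GML m n).Adj ⟨(a, d), by omega⟩ ⟨(a, d + 1), pd⟩ := by
          apply adj_of_rel
          · simp only [ne_eq, Prod.mk.injEq]; omega
          · exact Or.inr (Or.inl ⟨rfl, rfl⟩)
        exact ⟨p.concat hadj, by rw [SimpleGraph.Walk.length_concat, hp]; omega⟩

/-- Monotone grid walk from `(a,b)` to `(c,d)`. -/
lemma grid {m n : ℕ} (a b c d : ℕ) (hac : a ≤ c) (hbd : b ≤ d)
    (pa : 1 ≤ a ∧ a ≤ m - 1 ∧ 1 ≤ b ∧ b ≤ n)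
    (pc : 1 ≤ c ∧ c ≤ m - 1 ∧ 1 ≤ d ∧ d ≤ n) :
    ∃ p : (GML m n).Walk ⟨(a, b), pa⟩ ⟨(c, d), pc⟩,
      p.length = (c - a) + (d - b) := by
  obtain ⟨p, hp⟩ := gridh (m := m) (n := n) a b c hac pa (by omega)
  obtain ⟨p', hp'⟩ := gridv (m := m) (n := n) c b d hbd (by omega) pc
  exact ⟨p.append p', by rw [SimpleGraph.Walk.length_append, hp, hp']⟩

/-- Key lemma: exact distance from `(1,1)` to `(i,q)`. -/
lemma key (m n : ℕ) (hn : 2 ≤ n) (hm : n + 4 ≤ m) (hpar : Even (m + n))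
    (q i : ℕ) (hq1 : 1 ≤ q) (hq2 : q ≤ n) (hi1 : 1 ≤ i) (hi2 : i ≤ m - 1)
    (u v : GMLVert m n) (hu : u.val = (1, 1)) (hv : v.val = (i, q)) :
    (i ≤ (m + n - 2 * q + 2) / 2 → (GML m n).dist u v = i + q - 2) ∧
    ((m + n - 2 * q + 4) / 2 ≤ i → (GML m n).dist u v = m + n - q - i) := by
  have pu : 1 ≤ (1 : ℕ) ∧ 1 ≤ m - 1 ∧ 1 ≤ (1 : ℕ) ∧ 1 ≤ n := by omega
  have pv : 1 ≤ i ∧ i ≤ m - 1 ∧ 1 ≤ q ∧ q ≤ n := by omega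
  have hu' : u = ⟨(1, 1), pu⟩ := Subtype.ext hu
  have hv' : v = ⟨(i, q), pv⟩ := Subtype.ext hv
  rw [hu', hv']
  obtain ⟨p1, hp1⟩ := grid 1 1 i q (by omega) (by omega) pu pv
  obtain ⟨p2, hp2⟩ := grid i q (m - 1) n (by omega) (by omega) pv (by omega)
  have hadj : (GML m n).Adj (⟨(m - 1, n), by omega⟩ : GMLVert m n)
      ⟨(1, 1), pu⟩ := by
    apply adj_of_rel
    · show ((m - 1, n) : ℕ × ℕ) ≠ (1, 1)
      simp only [ne_eq, Prod.mk.injEq]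
      omega
    · exact Or.inr (Or.inr ⟨rfl, rfl, rfl⟩)
  have h1 := SimpleGraph.dist_le p1
  have h2 := SimpleGraph.dist_le (SimpleGraph.Walk.cons hadj.symm p2.reverse)
  rw [SimpleGraph.Walk.length_cons, SimpleGraph.Walk.length_reverse, hp2] at h2
  obtain ⟨p, hp0⟩ := p1.reachable.exists_walk_length_eq_dist
  have hlow := pot_walk hn hm p
  rw [hp0] at hlow
  simp only [pot] at hlow
  obtain ⟨k, hk⟩ := hpar
  exact ⟨fun hc => by omega, fun hc => by omega⟩

end Stmt13Aux

open Stmt13Aux in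
theorem stmt13 (m n : ℕ) (hn : 2 ≤ n) (hm : n + 4 ≤ m) (hpar : Even (m + n))
    (q i : ℕ) (hq1 : 1 ≤ q) (hq2 : q ≤ n) (hi1 : 1 ≤ i) (hi2 : i ≤ m - 1) :
    (i ≤ (m + n - 2 * q + 2) / 2 →
      (GML m n).dist ⟨(1, 1), by omega⟩ ⟨(i, q), by omega⟩ = i + q - 2) ∧
    ((m + n - 2 * q + 4) / 2 ≤ i →
      (GML m n).dist ⟨(1, 1), by omega⟩ ⟨(i, q), by omega⟩ = m + n - q - i) :=
  key m n hn hm hpar q i hq1 hq2 hi1 hi2 _ _ rfl rfl
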